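/- arXiv:1402.1929 — 5 statements merged into one kernel-verified Lean document; each statement's English description precedes it below -/
import Mathlib

section
/- For M = [[A,B],[C,D]] in U(n,n) (defined by M̄ᵀ J M = J with J = [[0,-E],[E,0]]) and Z in the hermitian half plane H_n = {Z ∈ C^{n×n} : i(Z̄ᵀ - Z) > 0}, one has det(CZ+D) = det(M) · det(C̄Zᵀ + D̄). -/
open Matrix
open scoped ComplexConjugate ComplexOrder

/-- The matrix `J = [[0,-E],[E,0]]` defining the unitary group `U(n,n)`. -/
def Jmat (n : ℕ) : Matrix (Fin n ⊕ Fin n) (Fin n ⊕ Fin n) ℂ :=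
  Matrix.fromBlocks 0 (-1) 1 0

/-- `M ∈ U(n,n)` iff `M̄ᵀ J M = J`. -/
def inUnn (n : ℕ) (M : Matrix (Fin n ⊕ Fin n) (Fin n ⊕ Fin n) ℂ) : Prop :=
  Mᴴ * Jmat n * M = Jmat n

/-- `Z` lies in the hermitian half plane `H_n` iff `i(Z̄ᵀ - Z)` is positive definite. -/
def inHalfPlane (n : ℕ) (Z : Matrix (Fin n) (Fin n) ℂ) : Prop :=
  (Complex.I • (Zᴴ - Z)).PosDef

private lemma key_rel (n : ℕ) (A B C D X Y : Matrix (Fin n) (Fin n) ℂ)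
    (h1 : Cᴴ * A - Aᴴ * C = 0) (h2 : Cᴴ * B - Aᴴ * D = -1)
    (h3 : Dᴴ * A - Bᴴ * C = 1) (h4 : Dᴴ * B - Bᴴ * D = 0) :
    (C * X + D)ᴴ * (A * Y + B) - (A * X + B)ᴴ * (C * Y + D) = Y - Xᴴ := by
  have expand : (C * X + D)ᴴ * (A * Y + B) - (A * X + B)ᴴ * (C * Y + D)
      = Xᴴ * (Cᴴ * A - Aᴴ * C) * Y + Xᴴ * (Cᴴ * B - Aᴴ * D)
        + (Dᴴ * A - Bᴴ * C) * Y + (Dᴴ * B - Bᴴ * D) := by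
    simp only [conjTranspose_add, conjTranspose_mul]
    noncomm_ring
  rw [expand, h1, h2, h3, h4]
  noncomm_ring

/-- For `M = [[A,B],[C,D]] ∈ U(n,n)` and `Z ∈ H_n` one has
`det(CZ+D) = det M · det(C̄Zᵀ + D̄)`. -/
theorem det_block_eq_detM_mul_det_conj (n : ℕ)
    (M : Matrix (Fin n ⊕ Fin n) (Fin n ⊕ Fin n) ℂ) (hM : inUnn n M)
    (Z : Matrix (Fin n) (Fin n) ℂ) (hZ : inHalfPlane n Z) :
    (M.toBlocks₂₁ * Z + M.toBlocks₂₂).det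
      = M.det *
        (M.toBlocks₂₁.map (starRingEnd ℂ) * Zᵀ + M.toBlocks₂₂.map (starRingEnd ℂ)).det := by
  set A := M.toBlocks₁₁ with hA
  set B := M.toBlocks₁₂ with hB
  set C := M.toBlocks₂₁ with hC
  set D := M.toBlocks₂₂ with hD
  have hMblocks : M = fromBlocks A B C D := (Matrix.fromBlocks_toBlocks M).symm
  -- extract block relations from hM
  have hblocks : fromBlocks (Cᴴ * A - Aᴴ * C) (Cᴴ * B - Aᴴ * D)
      (Dᴴ * A - Bᴴ * C) (Dᴴ * B - Bᴴ * D) = fromBlocks 0 (-1) 1 0 := by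
    have h := hM
    rw [inUnn, Jmat, hMblocks, fromBlocks_conjTranspose, fromBlocks_multiply,
      fromBlocks_multiply] at h
    rw [← h]
    congr 1 <;> noncomm_ring
  have h1 : Cᴴ * A - Aᴴ * C = 0 := by
    have := congrArg Matrix.toBlocks₁₁ hblocks; simpa [toBlocks_fromBlocks₁₁] using this
  have h2 : Cᴴ * B - Aᴴ * D = -1 := by
    have := congrArg Matrix.toBlocks₁₂ hblocks; simpa [toBlocks_fromBlocks₁₂] using this
  have h3 : Dᴴ * A - Bᴴ * C = 1 := by
    have := congrArg Matrix.toBlocks₂₁ hblocks; simpa [toBlocks_fromBlocks₂₁] using this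
  have h4 : Dᴴ * B - Bᴴ * D = 0 := by
    have := congrArg Matrix.toBlocks₂₂ hblocks; simpa [toBlocks_fromBlocks₂₂] using this
  -- two key relations
  have k1 : (C * Zᴴ + D)ᴴ * (A * Zᴴ + B) - (A * Zᴴ + B)ᴴ * (C * Zᴴ + D) = Zᴴ - Z := by
    simpa using key_rel n A B C D Zᴴ Zᴴ h1 h2 h3 h4
  have k2 : (C * Zᴴ + D)ᴴ * (A * Z + B) - (A * Zᴴ + B)ᴴ * (C * Z + D) = 0 := by
    simpa using key_rel n A B C D Zᴴ Z h1 h2 h3 h4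
  -- det (Zᴴ - Z) ≠ 0
  have hdet : (Zᴴ - Z).det ≠ 0 := by
    have h0 : (Complex.I • (Zᴴ - Z)).det ≠ 0 := hZ.det_pos.ne'
    rw [det_smul] at h0
    exact fun h => h0 (by rw [h, mul_zero])
  -- main determinant computation
  set P := fromBlocks (A * Zᴴ + B) (A * Z + B) (C * Zᴴ + D) (C * Z + D) with hPdef
  have hP : M * fromBlocks Zᴴ Z 1 1 = P := by
    rw [hMblocks, fromBlocks_multiply, hPdef]
    simp
  have hdetP : P.det = M.det * (Zᴴ - Z).det := by
    rw [← hP, det_mul, det_fromBlocks_one₂₂]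
    simp
  set L := fromBlocks (C * Zᴴ + D)ᴴ (-(A * Zᴴ + B)ᴴ) (0 : Matrix (Fin n) (Fin n) ℂ) (1 : Matrix (Fin n) (Fin n) ℂ) with hLdef
  have hLP : L * P = fromBlocks (Zᴴ - Z) 0 (C * Zᴴ + D) (C * Z + D) := by
    rw [hLdef, hPdef, fromBlocks_multiply, neg_mul, neg_mul, ← sub_eq_add_neg,
      ← sub_eq_add_neg, k1, k2, Matrix.zero_mul, Matrix.zero_mul, Matrix.one_mul,
      Matrix.one_mul, zero_add, zero_add]
  have hdetL : L.det = ((C * Zᴴ + D)ᴴ).det := by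
    rw [hLdef, det_fromBlocks_zero₂₁, det_one, mul_one]
  have main : ((C * Zᴴ + D)ᴴ).det * (M.det * (Zᴴ - Z).det)
      = (Zᴴ - Z).det * (C * Z + D).det := by
    rw [← hdetL, ← hdetP, ← det_mul, hLP, det_fromBlocks_zero₁₂]
  have main2 : (C * Z + D).det = M.det * ((C * Zᴴ + D)ᴴ).det := by
    apply mul_left_cancel₀ hdet
    rw [← main]; ring
  rw [main2]
  congr 1
  rw [← det_transpose (C.map (starRingEnd ℂ) * Zᵀ + D.map (starRingEnd ℂ))]
  congr 1
  ext i j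
  simp [conjTranspose_apply, transpose_apply, Matrix.add_apply, Matrix.mul_apply,
    Finset.sum_mul, mul_comm, map_sum]
end

section
/- For M in U(n,n) and Z in the hermitian half plane H_n, the matrix CZ+D is invertible, i.e. (M,Z) ↦ CZ+D is well-defined as an element of GL(n,C). -/
/-!
If `(CZ + D) v = 0` with `v ≠ 0`, then `M` sends `w = (Zv, v)` to a vector whose second block
vanishes, hence is isotropic for the hermitian form `w ↦ w̄ᵀ J w`. Since `M ∈ U(n,n)` preserves
this form and `w̄ᵀ J w = v̄ᵀ (Z - Z̄ᵀ) v`, this contradicts the positivity of `i (Z̄ᵀ - Z)`.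
-/

open Matrix
open scoped ComplexOrder

namespace Matrix

theorem star_mulVec_dotProduct_mulVec_mulVec {ι R : Type*} [Fintype ι] [CommRing R] [StarRing R]
    {J M : Matrix ι ι R} (hM : Mᴴ * J * M = J) (w : ι → R) :
    star (M *ᵥ w) ⬝ᵥ (J *ᵥ (M *ᵥ w)) = star w ⬝ᵥ (J *ᵥ w) := by
  rw [star_mulVec, ← dotProduct_mulVec, mulVec_mulVec, mulVec_mulVec, hM]

theorem mulVec_sumElim_mulVec {k l o p R : Type*} [Fintype k] [Fintype l] [Semiring R]
    (M : Matrix (o ⊕ p) (k ⊕ l) R) (Z : Matrix k l R) (v : l → R) :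
    M *ᵥ Sum.elim (Z *ᵥ v) v =
      Sum.elim ((M.toBlocks₁₁ * Z + M.toBlocks₁₂) *ᵥ v)
        ((M.toBlocks₂₁ * Z + M.toBlocks₂₂) *ᵥ v) := by
  rw [← fromBlocks_toBlocks M, fromBlocks_mulVec]
  simp only [Sum.elim_comp_inl, Sum.elim_comp_inr, toBlocks_fromBlocks₁₁, toBlocks_fromBlocks₁₂,
    toBlocks_fromBlocks₂₁, toBlocks_fromBlocks₂₂, add_mulVec, mulVec_mulVec]

end Matrix

theorem star_sumElim_dotProduct_Jmat_mulVec {n : ℕ} (x y : Fin n → ℂ) :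
    star (Sum.elim x y) ⬝ᵥ (Jmat n *ᵥ Sum.elim x y) = star y ⬝ᵥ x - star x ⬝ᵥ y := by
  rw [Jmat, fromBlocks_mulVec, Function.star_sumElim, sumElim_dotProduct_sumElim]
  simp only [Sum.elim_comp_inl, Sum.elim_comp_inr, zero_mulVec, neg_mulVec, one_mulVec, zero_add,
    add_zero, dotProduct_neg]
  ring

theorem inHalfPlane.star_dotProduct_mulVec_ne {n : ℕ} {Z : Matrix (Fin n) (Fin n) ℂ}
    (hZ : inHalfPlane n Z) {v : Fin n → ℂ} (hv : v ≠ 0) :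
    star v ⬝ᵥ (Z *ᵥ v) ≠ star (Z *ᵥ v) ⬝ᵥ v := by
  intro h
  have hpos := hZ.dotProduct_mulVec_pos hv
  rw [star_mulVec, ← dotProduct_mulVec] at h
  rw [smul_mulVec, dotProduct_smul, sub_mulVec, dotProduct_sub, h, sub_self, smul_zero] at hpos
  exact lt_irrefl 0 hpos

/-- For `M = [[A,B],[C,D]] ∈ U(n,n)` and `Z ∈ H_n`, the matrix `CZ+D` is invertible,
so `(M,Z) ↦ CZ+D` is well defined as an element of `GL(n,ℂ)`. -/
theorem isUnit_CZ_add_D (n : ℕ)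
    (M : Matrix (Fin n ⊕ Fin n) (Fin n ⊕ Fin n) ℂ) (hM : inUnn n M)
    (Z : Matrix (Fin n) (Fin n) ℂ) (hZ : inHalfPlane n Z) :
    IsUnit (M.toBlocks₂₁ * Z + M.toBlocks₂₂) := by
  rw [isUnit_iff_isUnit_det, isUnit_iff_ne_zero]
  intro hdet
  obtain ⟨v, hv, hCZD⟩ := exists_mulVec_eq_zero_iff.2 hdet
  have hform := star_mulVec_dotProduct_mulVec_mulVec hM (Sum.elim (Z *ᵥ v) v)
  rw [mulVec_sumElim_mulVec, hCZD, star_sumElim_dotProduct_Jmat_mulVec,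
    star_sumElim_dotProduct_Jmat_mulVec] at hform
  simp only [star_zero, zero_dotProduct, dotProduct_zero, sub_zero] at hform
  exact hZ.star_dotProduct_mulVec_ne hv (sub_eq_zero.1 hform.symm)
end

section
/- The Jacobian of the action of M ∈ U(n,n) at Z ∈ H_n, viewed as a linear map on C^{n×n}, is W ↦ ((C̄Zᵀ+D̄)ᵀ)^{-1} W (CZ+D)^{-1}, and its determinant equals det(M)^n · det(CZ+D)^{-2n}. -/
open Matrix
open scoped ComplexOrder

attribute [local instance] Matrix.normedAddCommGroup Matrix.normedSpace

/-- The action `MZ = (AZ+B)(CZ+D)⁻¹` of `U(n,n)` on the hermitian half plane. -/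
noncomputable def act (n : ℕ) (M : Matrix (Fin n ⊕ Fin n) (Fin n ⊕ Fin n) ℂ)
    (Z : Matrix (Fin n) (Fin n) ℂ) : Matrix (Fin n) (Fin n) ℂ :=
  (M.toBlocks₁₁ * Z + M.toBlocks₁₂) * (M.toBlocks₂₁ * Z + M.toBlocks₂₂)⁻¹

/-- The linear endomorphism `W ↦ A W B` of the space of `n × n` complex matrices. -/
noncomputable def mulLeftRight (n : ℕ) (A B : Matrix (Fin n) (Fin n) ℂ) :
    Matrix (Fin n) (Fin n) ℂ →ₗ[ℂ] Matrix (Fin n) (Fin n) ℂ where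
  toFun W := A * W * B
  map_add' W₁ W₂ := by simp only [Matrix.mul_add, Matrix.add_mul]
  map_smul' c W := by simp [Matrix.mul_smul, Matrix.smul_mul]

/-!
The action is the linear fractional map `W ↦ (AW + B)(CW + D)⁻¹`, whose derivative at `Z` is
`W ↦ (A - (MZ)C) W (CZ + D)⁻¹`. The `U(n,n)` relations `Mᴴ J M = J`, read on suitable block
columns, give `(CZᴴ + D)ᴴ (A - (MZ)C) = 1`, so the left factor is `((C̄Zᵀ + D̄)ᵀ)⁻¹`; on the
columns `(Z, 1)` they give `Z - Zᴴ = gᴴ(AZ + B) - (AZ + B)ᴴ g` for `g = CZ + D`, so a kernel vector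
of `g` would be isotropic for the definite form `i(Zᴴ - Z)`. The determinant of `W ↦ PWQ` is
`det P ^ n * det Q ^ n`, and the Schur complement gives `det M = det g · det(A - (MZ)C)`.
-/

open scoped Kronecker

theorem Matrix.det_mulLeftRight {R m : Type*} [CommRing R] [Fintype m] [DecidableEq m]
    (P Q : Matrix m m R) :
    LinearMap.det (LinearMap.mulLeftRight R (P, Q)) =
      P.det ^ Fintype.card m * Q.det ^ Fintype.card m := by
  let vecEquiv : Matrix m m R ≃ₗ[R] (m × m → R) :=
    transposeLinearEquiv m m R R ≪≫ₗ (LinearEquiv.curry R R m m).symm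
  have hconj : (vecEquiv : Matrix m m R →ₗ[R] _) ∘ₗ LinearMap.mulLeftRight R (P, Q) ∘ₗ
      (vecEquiv.symm : _ →ₗ[R] Matrix m m R) = toLin' (Qᵀ ⊗ₖ P) := by
    refine LinearMap.ext fun x => ?_
    obtain ⟨X, rfl⟩ := vecEquiv.surjective x
    -- `vecEquiv X` is `vec X` by definition
    simp only [LinearMap.comp_apply, LinearEquiv.coe_coe, LinearEquiv.symm_apply_apply,
      toLin'_apply]
    exact (kronecker_mulVec_vec P X Qᵀ).symm
  rw [← LinearMap.det_conj _ vecEquiv, hconj, LinearMap.det_toLin', det_kronecker,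
    det_transpose, mul_comm]

/- `HasFDerivAt` only sees the topology, which the entrywise sup norm shares with the
`ℓ∞`-operator norm; for the latter the matrices form a complete normed algebra, where the product
rule and the derivative of `Ring.inverse` are available. -/
theorem Matrix.hasFDerivAt_linearFractional {𝕜 m : Type*} [RCLike 𝕜] [Fintype m] [DecidableEq m]
    (A B C D Z : Matrix m m 𝕜) (hg : IsUnit (C * Z + D).det) :
    HasFDerivAt (fun W => (A * W + B) * (C * W + D)⁻¹)
      (LinearMap.toContinuousLinearMap
        (LinearMap.mulLeftRight 𝕜 (A - (A * Z + B) * (C * Z + D)⁻¹ * C, (C * Z + D)⁻¹))) Z := by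
  let _ : NormedRing (Matrix m m 𝕜) := Matrix.linftyOpNormedRing
  let _ : NormedAlgebra 𝕜 (Matrix m m 𝕜) := Matrix.linftyOpNormedAlgebra
  -- completeness has to be taken for the `ℓ∞` uniform structure, not the ambient one
  have _ : HasSummableGeomSeries (Matrix m m 𝕜) :=
    @instHasSummableGeomSeriesOfCompleteSpace _ _ (FiniteDimensional.complete 𝕜 _)
  have hnum : HasFDerivAt (fun W => A * W + B) (ContinuousLinearMap.mul 𝕜 _ A) Z :=
    (ContinuousLinearMap.mul 𝕜 _ A).hasFDerivAt.add_const B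
  have hden : HasFDerivAt (fun W => C * W + D) (ContinuousLinearMap.mul 𝕜 _ C) Z :=
    (ContinuousLinearMap.mul 𝕜 _ C).hasFDerivAt.add_const D
  obtain ⟨u, hu⟩ := (isUnit_iff_isUnit_det _).2 hg
  have hinv := hasFDerivAt_ringInverse (𝕜 := 𝕜) u
  rw [hu] at hinv
  have hfun : (fun W => (A * W + B) * (C * W + D)⁻¹)
      = (fun W => A * W + B) * (Ring.inverse ∘ fun W => C * W + D) := by
    funext W
    simp [nonsing_inv_eq_ringInverse]
  rw [hfun]
  refine (hnum.mul' (hinv.comp Z hden)).congr_fderiv ?_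
  ext1 W
  change _ = (A - (A * Z + B) * (C * Z + D)⁻¹ * C) * W * (C * Z + D)⁻¹
  simp only [← Ring.inverse_unit, hu, ← nonsing_inv_eq_ringInverse, Function.comp_apply,
    _root_.add_apply, _root_.smul_apply, ContinuousLinearMap.neg_comp, _root_.neg_apply,
    ContinuousLinearMap.comp_apply, ContinuousLinearMap.mul_apply',
    ContinuousLinearMap.mulLeftRight_apply, smul_eq_mul, MulOpposite.smul_eq_mul_unop,
    MulOpposite.unop_op]
  noncomm_ring

theorem Matrix.det_fromBlocks_eq_det_mul_det_schur {R m : Type*} [CommRing R] [Fintype m]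
    [DecidableEq m] {A B C D : Matrix m m R} (Z : Matrix m m R) (hg : IsUnit (C * Z + D).det) :
    (fromBlocks A B C D).det = (C * Z + D).det * (A - (A * Z + B) * (C * Z + D)⁻¹ * C).det := by
  have hshear : fromBlocks A B C D * fromBlocks 1 Z 0 1 =
      fromBlocks A (A * Z + B) C (C * Z + D) := by
    simp [fromBlocks_multiply]
  have hdet := congrArg det hshear
  rw [det_mul, det_fromBlocks_zero₂₁, det_one, mul_one, mul_one] at hdet
  have := invertibleOfIsUnitDet _ hg
  rw [hdet, det_fromBlocks₂₂, invOf_eq_nonsing_inv]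

theorem Matrix.conjTranspose_mul_conjTranspose_add {R m : Type*} [CommRing R] [StarRing R]
    [Fintype m] (C Z D : Matrix m m R) :
    (C * Zᴴ + D)ᴴ = (C.map (starRingEnd R) * Zᵀ + D.map (starRingEnd R))ᵀ := by
  ext i j
  simp [mul_apply, mul_comm, starRingEnd_apply]

theorem mulLeftRight_eq_linearMap_mulLeftRight (n : ℕ) (P Q : Matrix (Fin n) (Fin n) ℂ) :
    mulLeftRight n P Q = LinearMap.mulLeftRight ℂ (P, Q) :=
  rfl

section UnitaryGroup

variable {n : ℕ} {k l : Type*}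

theorem conjTranspose_fromRows_mul_Jmat_mul_fromRows (P₁ Q₁ : Matrix (Fin n) k ℂ)
    (P₂ Q₂ : Matrix (Fin n) l ℂ) :
    (fromRows P₁ Q₁)ᴴ * Jmat n * fromRows P₂ Q₂ = Q₁ᴴ * P₂ - P₁ᴴ * Q₂ := by
  rw [conjTranspose_fromRows_eq_fromCols_conjTranspose, Jmat, fromCols_mul_fromBlocks,
    fromCols_mul_fromRows]
  simp [sub_eq_add_neg, add_comm]

theorem inUnn.conjTranspose_mul_Jmat_mul {M : Matrix (Fin n ⊕ Fin n) (Fin n ⊕ Fin n) ℂ}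
    (hM : inUnn n M) (X : Matrix (Fin n ⊕ Fin n) k ℂ) (Y : Matrix (Fin n ⊕ Fin n) l ℂ) :
    (M * X)ᴴ * Jmat n * (M * Y) = Xᴴ * Jmat n * Y := by
  have hassoc : Xᴴ * Mᴴ * Jmat n * (M * Y) = Xᴴ * (Mᴴ * Jmat n * M) * Y := by
    simp only [Matrix.mul_assoc]
  rw [conjTranspose_mul, hassoc, hM]

variable {A B C D : Matrix (Fin n) (Fin n) ℂ}

theorem inUnn.fromBlocks_form (hM : inUnn n (fromBlocks A B C D))
    (P₁ Q₁ : Matrix (Fin n) k ℂ) (P₂ Q₂ : Matrix (Fin n) l ℂ) :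
    (C * P₁ + D * Q₁)ᴴ * (A * P₂ + B * Q₂) - (A * P₁ + B * Q₁)ᴴ * (C * P₂ + D * Q₂) =
      Q₁ᴴ * P₂ - P₁ᴴ * Q₂ := by
  simpa only [fromBlocks_mul_fromRows, conjTranspose_fromRows_mul_Jmat_mul_fromRows] using
    hM.conjTranspose_mul_Jmat_mul (fromRows P₁ Q₁) (fromRows P₂ Q₂)

theorem inUnn.isUnit_det_denom (hM : inUnn n (fromBlocks A B C D))
    {Z : Matrix (Fin n) (Fin n) ℂ} (hZ : inHalfPlane n Z) : IsUnit (C * Z + D).det := by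
  rw [isUnit_iff_ne_zero]
  intro hdet
  obtain ⟨v, hv, hgv⟩ := exists_mulVec_eq_zero_iff.2 hdet
  have hform := hM.fromBlocks_form (k := Fin n) Z 1 Z 1
  simp only [Matrix.mul_one, conjTranspose_one, Matrix.one_mul] at hform
  have hisotropic : star v ⬝ᵥ ((Z - Zᴴ) *ᵥ v) = 0 := by
    rw [← hform, sub_mulVec, dotProduct_sub, ← mulVec_mulVec, ← mulVec_mulVec, hgv,
      dotProduct_mulVec, ← star_mulVec, hgv]
    simp
  have hpos := hZ.dotProduct_mulVec_pos hv
  rw [smul_mulVec, dotProduct_smul, ← neg_sub, neg_mulVec, dotProduct_neg, hisotropic] at hpos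
  simp at hpos

theorem inUnn.conjTranspose_denom_mul (hM : inUnn n (fromBlocks A B C D))
    {Z : Matrix (Fin n) (Fin n) ℂ} (hg : IsUnit (C * Z + D).det) :
    (C * Zᴴ + D)ᴴ * (A - (A * Z + B) * (C * Z + D)⁻¹ * C) = 1 := by
  have hsymm := hM.fromBlocks_form (k := Fin n) Zᴴ 1 Z 1
  have hone := hM.fromBlocks_form (k := Fin n) (l := Fin n) Zᴴ 1 1 0
  simp only [Matrix.mul_one, Matrix.mul_zero, add_zero, conjTranspose_one,
    conjTranspose_conjTranspose, Matrix.one_mul, sub_self, sub_zero, sub_eq_zero] at hsymm hone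
  rw [Matrix.mul_sub, ← Matrix.mul_assoc, ← Matrix.mul_assoc, hsymm,
    mul_nonsing_inv_cancel_right _ _ hg, hone]

end UnitaryGroup

/-- The Jacobian of the action of `M ∈ U(n,n)` at `Z ∈ H_n` is the linear map
`W ↦ ((C̄Zᵀ+D̄)ᵀ)⁻¹ W (CZ+D)⁻¹`, and its determinant is `det(M)^n · det(CZ+D)^{-2n}`. -/
theorem jacobian_act (n : ℕ)
    (M : Matrix (Fin n ⊕ Fin n) (Fin n ⊕ Fin n) ℂ) (hM : inUnn n M)
    (Z : Matrix (Fin n) (Fin n) ℂ) (hZ : inHalfPlane n Z) :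
    HasFDerivAt (fun W => act n M W)
      (LinearMap.toContinuousLinearMap
        (mulLeftRight n
          ((M.toBlocks₂₁.map (starRingEnd ℂ) * Zᵀ + M.toBlocks₂₂.map (starRingEnd ℂ))ᵀ)⁻¹
          (M.toBlocks₂₁ * Z + M.toBlocks₂₂)⁻¹)) Z ∧
    LinearMap.det
        (mulLeftRight n
          ((M.toBlocks₂₁.map (starRingEnd ℂ) * Zᵀ + M.toBlocks₂₂.map (starRingEnd ℂ))ᵀ)⁻¹
          (M.toBlocks₂₁ * Z + M.toBlocks₂₂)⁻¹)
      = M.det ^ n * ((M.toBlocks₂₁ * Z + M.toBlocks₂₂).det)⁻¹ ^ (2 * n) := by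
  obtain ⟨A, B, C, D, rfl⟩ : ∃ A B C D, M = fromBlocks A B C D :=
    ⟨_, _, _, _, (fromBlocks_toBlocks M).symm⟩
  have hg := hM.isUnit_det_denom hZ
  have hinv : ((C * Zᴴ + D)ᴴ)⁻¹ = A - (A * Z + B) * (C * Z + D)⁻¹ * C :=
    inv_eq_right_inv (hM.conjTranspose_denom_mul hg)
  simp only [act, toBlocks_fromBlocks₁₁, toBlocks_fromBlocks₁₂, toBlocks_fromBlocks₂₁,
    toBlocks_fromBlocks₂₂, ← conjTranspose_mul_conjTranspose_add, hinv,
    mulLeftRight_eq_linearMap_mulLeftRight]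
  refine ⟨hasFDerivAt_linearFractional A B C D Z hg, ?_⟩
  rw [det_mulLeftRight, Fintype.card_fin, det_fromBlocks_eq_det_mul_det_schur Z hg,
    det_nonsing_inv, Ring.inverse_eq_inv']
  rw [mul_pow, two_mul, pow_add, ← mul_assoc, mul_right_comm ((C * Z + D).det ^ n),
    ← mul_pow (C * Z + D).det, mul_inv_cancel₀ hg.ne_zero, one_pow, one_mul]
end

section
/- The quaternionic symplectic group Sp(n,H) = {M ∈ H^{2n×2n} : M̄ᵀJM = J} acts on the quaternionic half plane H_n = X_n + iY_n (Y_n the cone of positive definite quaternionic hermitian matrices) by Z ↦ (AZ+B)(CZ+D)^{-1}, i.e. CZ+D is invertible and the image again lies in H_n. -/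
open Matrix Quaternion
open scoped ComplexOrder

/-- The check map `x ↦ x̌` from the quaternions to `2 × 2` complex matrices. -/
def check (x : Quaternion ℝ) : Matrix (Fin 2) (Fin 2) ℂ :=
  !![⟨x.re, x.imI⟩, ⟨x.imJ, x.imK⟩; ⟨-x.imJ, x.imK⟩, ⟨x.re, -x.imI⟩]

/-- Entrywise application of the check map to a quaternionic matrix. -/
def checkMat {m : Type*} (A : Matrix m m (Quaternion ℝ)) :
    Matrix (m × Fin 2) (m × Fin 2) ℂ :=
  fun p q => check (A p.1 q.1) p.2 q.2

/-- The matrix `J = [[0,-E],[E,0]]` over the quaternions. -/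
noncomputable def Jq (n : ℕ) : Matrix (Fin n ⊕ Fin n) (Fin n ⊕ Fin n) (Quaternion ℝ) :=
  Matrix.fromBlocks 0 (-1) 1 0

/-- `M ∈ Sp(n,ℍ)` iff `M̄ᵀ J M = J`. -/
def inSp (n : ℕ) (M : Matrix (Fin n ⊕ Fin n) (Fin n ⊕ Fin n) (Quaternion ℝ)) : Prop :=
  Mᴴ * Jq n * M = Jq n


/-!
All matrices are compared inside complex `2n × 2n` matrices via the check map. For symplectic
blocks `A, B, C, D` one has `(CZ+D)* (AW+B) - (AZ+B)* (CW+D) = W - Z*`. Taking `W = Z = X + iY`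
gives `(CZ+D)* (AZ+B) - (AZ+B)* (CZ+D) = 2iY`; a kernel vector `v` of `CZ+D` would force
`v* Y v = 0`, so `CZ+D` is invertible, and the imaginary part of `W' = (AZ+B)(CZ+D)⁻¹` is the
congruent matrix `(CZ+D)⁻* Y (CZ+D)⁻¹`, again positive definite. The image of the check map is the
fixed set of the antilinear ring endomorphism `σ W = Ω W̄ Ω⁻¹`. Since `σ Z = Z*`, the identity with
`W = Z*` gives `σ W' = W'*`, so the real and imaginary parts of `W'` are fixed by `σ` and hence come
from quaternionic hermitian matrices.
-/

open scoped ComplexConjugate ComplexStarModule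

section Symplectic

variable {R : Type*} [Ring R] [StarRing R]

/-- The block form of `Mᴴ J M = J` for `M = [[A, B], [C, D]]`; the fourth block relation is the
adjoint of the third. -/
structure IsSymplecticBlocks (A B C D : R) : Prop where
  star_mul_comm_AC : star C * A = star A * C
  star_mul_comm_BD : star D * B = star B * D
  star_mul_sub_star_mul_eq_one : star D * A - star B * C = 1

namespace IsSymplecticBlocks

variable {A B C D : R}

lemma star_mul_sub_star_mul_eq_neg_one (h : IsSymplecticBlocks A B C D) :
    star C * B - star A * D = -1 := by
  have := congrArg star h.star_mul_sub_star_mul_eq_one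
  rw [star_sub, star_mul, star_mul, star_star, star_star, star_one] at this
  rw [← this, neg_sub]

lemma map {S F : Type*} [Ring S] [StarRing S] [FunLike F R S] [RingHomClass F R S]
    [StarHomClass F R S] (f : F) (h : IsSymplecticBlocks A B C D) :
    IsSymplecticBlocks (f A) (f B) (f C) (f D) where
  star_mul_comm_AC := by simpa only [map_mul, map_star] using congrArg f h.1
  star_mul_comm_BD := by simpa only [map_mul, map_star] using congrArg f h.2
  star_mul_sub_star_mul_eq_one := by
    simpa only [map_sub, map_mul, map_star, map_one] using congrArg f h.3

lemma star_mul_sub_star_mul_eq (h : IsSymplecticBlocks A B C D) (Z W : R) :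
    star (C * Z + D) * (A * W + B) - star (A * Z + B) * (C * W + D) = W - star Z := by
  have expand : star (C * Z + D) * (A * W + B) - star (A * Z + B) * (C * W + D)
      = star Z * (star C * A - star A * C) * W + star Z * (star C * B - star A * D)
        + (star D * A - star B * C) * W + (star D * B - star B * D) := by
    simp only [star_add, star_mul]
    noncomm_ring
  rw [expand, h.star_mul_sub_star_mul_eq_neg_one, h.star_mul_sub_star_mul_eq_one,
    h.star_mul_comm_AC, h.star_mul_comm_BD]
  noncomm_ring

end IsSymplecticBlocks

end Symplectic

lemma isSymplecticBlocks_of_inSp {n : ℕ} {M : Matrix (Fin n ⊕ Fin n) (Fin n ⊕ Fin n) ℍ[ℝ]}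
    (hM : inSp n M) :
    IsSymplecticBlocks M.toBlocks₁₁ M.toBlocks₁₂ M.toBlocks₂₁ M.toBlocks₂₂ := by
  rw [inSp, Jq, ← fromBlocks_toBlocks M, fromBlocks_conjTranspose, fromBlocks_multiply,
    fromBlocks_multiply, fromBlocks_inj] at hM
  simp only [Matrix.mul_zero, Matrix.mul_one, Matrix.mul_neg, zero_add, add_zero] at hM
  obtain ⟨h₁₁, -, h₂₁, h₂₂⟩ := hM
  simp only [neg_mul, ← sub_eq_add_neg, sub_eq_zero] at h₁₁ h₂₁ h₂₂ ⊢
  exact ⟨h₁₁, h₂₂, h₂₁⟩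

def checkStarAlgHom : ℍ[ℝ] →⋆ₐ[ℝ] Matrix (Fin 2) (Fin 2) ℂ where
  toFun := check
  map_one' := by ext i j; fin_cases i <;> fin_cases j <;> simp [check, Complex.ext_iff]
  map_mul' x y := by
    ext i j
    fin_cases i <;> fin_cases j <;>
      simp [check, mul_apply, Complex.ext_iff] <;> constructor <;> ring
  map_zero' := by ext i j; fin_cases i <;> fin_cases j <;> simp [check, Complex.ext_iff]
  map_add' x y := by
    ext i j; fin_cases i <;> fin_cases j <;> simp [check, Complex.ext_iff] <;> ring
  commutes' r := by
    ext i j; fin_cases i <;> fin_cases j <;> simp [check, Complex.ext_iff, algebraMap_eq_diagonal]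
  map_star' x := by
    ext i j; fin_cases i <;> fin_cases j <;> simp [check, Complex.ext_iff]

lemma checkMat_injective {m : Type*} : Function.Injective (checkMat : Matrix m m ℍ[ℝ] → _) := by
  intro A B h
  refine Matrix.ext fun p q => ?_
  have h₀ := congrFun (congrFun h (p, 0)) (q, 0)
  have h₁ := congrFun (congrFun h (p, 0)) (q, 1)
  simp [checkMat, check, Complex.ext_iff] at h₀ h₁
  exact Quaternion.ext _ _ h₀.1 h₀.2 h₁.1 h₁.2

section CheckMat

variable (m : Type*) [Fintype m] [DecidableEq m]

noncomputable def checkMatStarAlgHom :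
    Matrix m m ℍ[ℝ] →⋆ₐ[ℝ] Matrix (m × Fin 2) (m × Fin 2) ℂ where
  __ := (compAlgEquiv m (Fin 2) ℂ ℝ).toAlgHom.comp checkStarAlgHom.toAlgHom.mapMatrix
  map_star' A := by
    ext p q
    exact congrFun (congrFun (map_star checkStarAlgHom (A q.1 p.1)) p.2) q.2

variable {m}

@[simp]
lemma checkMatStarAlgHom_apply (A : Matrix m m ℍ[ℝ]) : checkMatStarAlgHom m A = checkMat A :=
  rfl

lemma checkMat_conjTranspose (A : Matrix m m ℍ[ℝ]) : checkMat Aᴴ = (checkMat A)ᴴ :=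
  map_star (checkMatStarAlgHom m) A

end CheckMat

section QuaternionicStructure

variable {m : Type*} [Fintype m] [DecidableEq m]

/-- The antilinear map `W ↦ Ω W̄ Ω⁻¹`, `Ω` block diagonal with blocks `check j = [[0,1],[-1,0]]`;
its fixed points are exactly the matrices `checkMat A`. -/
def quatStructure : Matrix (m × Fin 2) (m × Fin 2) ℂ →+* Matrix (m × Fin 2) (m × Fin 2) ℂ where
  toFun W := of fun p q =>
    (-1) ^ (p.2 : ℕ) * (-1) ^ (q.2 : ℕ) * conj (W (p.1, p.2.rev) (q.1, q.2.rev))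
  map_one' := by
    ext ⟨a, s⟩ ⟨b, t⟩
    by_cases hab : a = b
    · subst hab; fin_cases s <;> fin_cases t <;> simp [one_apply]
    · simp [one_apply, hab]
  map_mul' V W := by
    ext ⟨a, s⟩ ⟨b, t⟩
    simp only [of_apply, mul_apply, Fintype.sum_prod_type, Fin.sum_univ_two, map_add, map_mul,
      map_sum, Finset.mul_sum]
    refine Finset.sum_congr rfl fun c _ => ?_
    fin_cases s <;> fin_cases t <;> simp <;> ring
  map_zero' := by ext; simp
  map_add' V W := by ext; simp only [of_apply, Matrix.add_apply, map_add, mul_add]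

lemma quatStructure_apply (W : Matrix (m × Fin 2) (m × Fin 2) ℂ) (p q : m × Fin 2) :
    quatStructure W p q =
      (-1) ^ (p.2 : ℕ) * (-1) ^ (q.2 : ℕ) * conj (W (p.1, p.2.rev) (q.1, q.2.rev)) :=
  rfl

lemma quatStructure_smul (c : ℂ) (W : Matrix (m × Fin 2) (m × Fin 2) ℂ) :
    quatStructure (c • W) = conj c • quatStructure W := by
  ext; simp [quatStructure_apply]; ring

lemma quatStructure_conjTranspose (W : Matrix (m × Fin 2) (m × Fin 2) ℂ) :
    quatStructure Wᴴ = (quatStructure W)ᴴ := by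
  ext ⟨a, s⟩ ⟨b, t⟩
  fin_cases s <;> fin_cases t <;> simp [quatStructure_apply]

lemma quatStructure_checkMat (A : Matrix m m ℍ[ℝ]) : quatStructure (checkMat A) = checkMat A := by
  ext ⟨a, s⟩ ⟨b, t⟩
  fin_cases s <;> fin_cases t <;> simp [quatStructure_apply, checkMat, check, Complex.ext_iff]

lemma exists_checkMat_eq_of_quatStructure_eq {W : Matrix (m × Fin 2) (m × Fin 2) ℂ}
    (h : quatStructure W = W) : ∃ A : Matrix m m ℍ[ℝ], checkMat A = W := by
  refine ⟨fun a b => ⟨(W (a, 0) (b, 0)).re, (W (a, 0) (b, 0)).im,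
    (W (a, 0) (b, 1)).re, (W (a, 0) (b, 1)).im⟩, ?_⟩
  ext ⟨a, s⟩ ⟨b, t⟩
  have h₁₁ := congrFun (congrFun h (a, 1)) (b, 1)
  have h₁₀ := congrFun (congrFun h (a, 1)) (b, 0)
  fin_cases s <;> fin_cases t <;> simp_all [quatStructure, checkMat, check, Complex.ext_iff]

lemma quatStructure_realPart {W : Matrix (m × Fin 2) (m × Fin 2) ℂ}
    (h : quatStructure W = Wᴴ) :
    quatStructure (ℜ W : Matrix (m × Fin 2) (m × Fin 2) ℂ) = ℜ W := by
  rw [realPart_apply_coe, ← Complex.coe_smul, quatStructure_smul, Complex.conj_ofReal, map_add,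
    star_eq_conjTranspose, quatStructure_conjTranspose, h, conjTranspose_conjTranspose, add_comm]

lemma quatStructure_imaginaryPart {W : Matrix (m × Fin 2) (m × Fin 2) ℂ}
    (h : quatStructure W = Wᴴ) :
    quatStructure (ℑ W : Matrix (m × Fin 2) (m × Fin 2) ℂ) = ℑ W := by
  rw [imaginaryPart_apply_coe, ← Complex.coe_smul, quatStructure_smul, quatStructure_smul,
    Complex.conj_ofReal, map_sub, star_eq_conjTranspose, quatStructure_conjTranspose, h,
    conjTranspose_conjTranspose, map_neg, Complex.conj_I, ← neg_sub, smul_neg, smul_neg, neg_smul,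
    neg_neg]

lemma exists_isHermitian_checkMat_eq {W : Matrix (m × Fin 2) (m × Fin 2) ℂ}
    (hσ : quatStructure W = W) (hW : Wᴴ = W) :
    ∃ A : Matrix m m ℍ[ℝ], Aᴴ = A ∧ checkMat A = W := by
  obtain ⟨A, rfl⟩ := exists_checkMat_eq_of_quatStructure_eq hσ
  exact ⟨A, checkMat_injective (by rw [checkMat_conjTranspose, hW]), rfl⟩

end QuaternionicStructure

section ComplexMatrix

variable {ι : Type*} [Fintype ι] [DecidableEq ι]

lemma isUnit_of_conjTranspose_mul_sub_eq_smul_posDef {S T Y : Matrix ι ι ℂ} {c : ℂ} (hc : c ≠ 0)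
    (hY : Y.PosDef) (h : Tᴴ * S - Sᴴ * T = c • Y) : IsUnit T := by
  rw [isUnit_iff_isUnit_det, isUnit_iff_ne_zero]
  intro hdet
  obtain ⟨v, hv, hTv⟩ := exists_mulVec_eq_zero_iff.mpr hdet
  have hvanish : c * (star v ⬝ᵥ Y *ᵥ v) = 0 := by
    rw [← smul_eq_mul, ← dotProduct_smul, ← smul_mulVec, ← h, sub_mulVec, dotProduct_sub,
      ← mulVec_mulVec, ← mulVec_mulVec, hTv, dotProduct_mulVec, ← star_mulVec, hTv]
    simp
  exact (hY.dotProduct_mulVec_pos hv).ne' ((mul_eq_zero.mp hvanish).resolve_left hc)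

lemma imaginaryPart_mul_inv {S T Y : Matrix ι ι ℂ} (hT : IsUnit T)
    (h : Tᴴ * S - Sᴴ * T = (2 * Complex.I) • Y) :
    (ℑ (S * T⁻¹) : Matrix ι ι ℂ) = T⁻¹ᴴ * Y * T⁻¹ := by
  have hTdet := (isUnit_iff_isUnit_det T).mp hT
  have hskew : S * T⁻¹ - (S * T⁻¹)ᴴ = (2 * Complex.I) • (T⁻¹ᴴ * Y * T⁻¹) := by
    calc S * T⁻¹ - (S * T⁻¹)ᴴ
        = T⁻¹ᴴ * Tᴴ * (S * T⁻¹) - T⁻¹ᴴ * Sᴴ * (T * T⁻¹) := by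
          rw [← conjTranspose_mul, mul_nonsing_inv T hTdet, conjTranspose_one, Matrix.one_mul,
            Matrix.mul_one, conjTranspose_mul]
      _ = T⁻¹ᴴ * (Tᴴ * S - Sᴴ * T) * T⁻¹ := by noncomm_ring
      _ = (2 * Complex.I) • (T⁻¹ᴴ * Y * T⁻¹) := by
          rw [h, Matrix.mul_smul, Matrix.smul_mul]
  rw [imaginaryPart_apply_coe, star_eq_conjTranspose, hskew, ← Complex.coe_smul, smul_smul,
    smul_smul]
  convert one_smul ℂ _
  push_cast
  linear_combination (-1 : ℂ) * Complex.I_sq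

lemma map_mul_inv_eq_conjTranspose {α : Type*} [CommRing α] [StarRing α]
    (σ : Matrix ι ι α →+* Matrix ι ι α) {S T : Matrix ι ι α} (hT : IsUnit T)
    (h : Tᴴ * σ S = Sᴴ * σ T) : σ (S * T⁻¹) = (S * T⁻¹)ᴴ := by
  have hTdet := (isUnit_iff_isUnit_det T).mp hT
  have hσT : σ T * σ T⁻¹ = 1 := by rw [← map_mul, mul_nonsing_inv T hTdet, map_one]
  calc σ (S * T⁻¹) = T⁻¹ᴴ * (Tᴴ * σ S) * σ T⁻¹ := by
        rw [map_mul, ← Matrix.mul_assoc, ← conjTranspose_mul, mul_nonsing_inv T hTdet,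
          conjTranspose_one, Matrix.one_mul]
    _ = (S * T⁻¹)ᴴ := by
        rw [h, Matrix.mul_assoc, Matrix.mul_assoc, hσT, Matrix.mul_one, conjTranspose_mul]

end ComplexMatrix

/-- The quaternionic symplectic group `Sp(n,ℍ)` acts on the quaternionic half plane
`H_n = X_n + iY_n`: for `M = [[A,B],[C,D]] ∈ Sp(n,ℍ)` and `Z = X + iY` with `X, Y`
quaternionic hermitian and `Y` positive definite (all viewed inside `ℂ^{2n×2n}` via the
check embedding), the matrix `CZ+D` is invertible and `(AZ+B)(CZ+D)⁻¹` again lies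
in `H_n`. -/
theorem sp_action (n : ℕ)
    (M : Matrix (Fin n ⊕ Fin n) (Fin n ⊕ Fin n) (Quaternion ℝ)) (hM : inSp n M)
    (X Y : Matrix (Fin n) (Fin n) (Quaternion ℝ))
    (hX : Xᴴ = X) (hY : Yᴴ = Y) (hYpos : (checkMat Y).PosDef) :
    IsUnit (checkMat M.toBlocks₂₁ * (checkMat X + Complex.I • checkMat Y)
        + checkMat M.toBlocks₂₂) ∧
    ∃ X' Y' : Matrix (Fin n) (Fin n) (Quaternion ℝ),
      X'ᴴ = X' ∧ Y'ᴴ = Y' ∧ (checkMat Y').PosDef ∧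
      (checkMat M.toBlocks₁₁ * (checkMat X + Complex.I • checkMat Y)
          + checkMat M.toBlocks₁₂) *
        (checkMat M.toBlocks₂₁ * (checkMat X + Complex.I • checkMat Y)
          + checkMat M.toBlocks₂₂)⁻¹
        = checkMat X' + Complex.I • checkMat Y' := by
  set Z := checkMat X + Complex.I • checkMat Y with hZ
  set T := checkMat M.toBlocks₂₁ * Z + checkMat M.toBlocks₂₂
  set S := checkMat M.toBlocks₁₁ * Z + checkMat M.toBlocks₁₂
  have hblocks := (isSymplecticBlocks_of_inSp hM).map (checkMatStarAlgHom (Fin n))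
  simp only [checkMatStarAlgHom_apply] at hblocks
  have hZ_star : Zᴴ = checkMat X - Complex.I • checkMat Y := by
    rw [hZ, conjTranspose_add, conjTranspose_smul, ← checkMat_conjTranspose,
      ← checkMat_conjTranspose, hX, hY, Complex.star_def, Complex.conj_I, neg_smul, sub_eq_add_neg]
  have hTS : Tᴴ * S - Sᴴ * T = (2 * Complex.I) • checkMat Y := by
    rw [← star_eq_conjTranspose, ← star_eq_conjTranspose, hblocks.star_mul_sub_star_mul_eq,
      star_eq_conjTranspose, hZ_star, hZ]
    module
  have hT : IsUnit T := isUnit_of_conjTranspose_mul_sub_eq_smul_posDef (by simp) hYpos hTS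
  have hσZ : quatStructure Z = Zᴴ := by
    rw [hZ_star, hZ, map_add, quatStructure_smul, quatStructure_checkMat, quatStructure_checkMat,
      Complex.conj_I, neg_smul, sub_eq_add_neg]
  have hσW : quatStructure (S * T⁻¹) = (S * T⁻¹)ᴴ := by
    refine map_mul_inv_eq_conjTranspose _ hT ?_
    have hTS_star := hblocks.star_mul_sub_star_mul_eq Z Zᴴ
    simp only [star_eq_conjTranspose, sub_self, sub_eq_zero] at hTS_star
    simpa only [S, T, map_add, map_mul, quatStructure_checkMat, hσZ] using hTS_star
  obtain ⟨X', hX', hX'W⟩ :=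
    exists_isHermitian_checkMat_eq (quatStructure_realPart hσW) (ℜ (S * T⁻¹)).2
  obtain ⟨Y', hY', hY'W⟩ :=
    exists_isHermitian_checkMat_eq (quatStructure_imaginaryPart hσW) (ℑ (S * T⁻¹)).2
  refine ⟨hT, X', Y', hX', hY', ?_, ?_⟩
  · rw [hY'W, imaginaryPart_mul_inv hT hTS]
    exact hYpos.conjTranspose_mul_mul_same
      (mulVec_injective_iff_isUnit.mpr (isUnit_nonsing_inv_iff.mpr hT))
  · rw [hX'W, hY'W, realPart_add_I_smul_imaginaryPart]
end

section
/- There exists a unique rational (holomorphic) representation ρ_Jac: GL(2n,C) → GL(Z_n) such that ρ_Jac(Ǔ) = ρ(U) for all U ∈ GL(n,H), where ρ(U)(W) = UWŪᵀ and Z_n = X_n ⊗_R C. -/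
open Matrix Quaternion

/-- `Z_n = X_n ⊗_ℝ ℂ`, the complexification of the space of quaternionic hermitian
matrices, realized as the ℂ-span of the check images of hermitian matrices. -/
noncomputable def Zn (n : ℕ) : Submodule ℂ (Matrix (Fin n × Fin 2) (Fin n × Fin 2) ℂ) :=
  Submodule.span ℂ
    {W | ∃ X : Matrix (Fin n) (Fin n) (Quaternion ℝ), Xᴴ = X ∧ W = checkMat X}

/-- A map `ρ : GL(2n,ℂ) → GL(Z_n)` is a rational (holomorphic) representation if,
with respect to a fixed basis of `Z_n`, all matrix entries of `ρ(g)` are polynomials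
in the entries of `g` divided by a power of `det g`. -/
noncomputable def IsRatRep (n : ℕ)
    (ρ : (Matrix (Fin n × Fin 2) (Fin n × Fin 2) ℂ)ˣ →* (Module.End ℂ (Zn n))ˣ) : Prop :=
  ∃ (k : ℕ) (P : Fin (Module.finrank ℂ (Zn n)) → Fin (Module.finrank ℂ (Zn n)) →
      MvPolynomial ((Fin n × Fin 2) × (Fin n × Fin 2)) ℂ),
    ∀ (g : (Matrix (Fin n × Fin 2) (Fin n × Fin 2) ℂ)ˣ) (i j),
      LinearMap.toMatrix (Module.finBasis ℂ (Zn n)) (Module.finBasis ℂ (Zn n))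
          ((ρ g : Module.End ℂ (Zn n))) i j * ((g : Matrix (Fin n × Fin 2) (Fin n × Fin 2) ℂ).det) ^ k
        = MvPolynomial.eval (fun p => (g : Matrix (Fin n × Fin 2) (Fin n × Fin 2) ℂ) p.1 p.2) (P i j)

/-!
On check matrices the symplectic adjoint `Aˢ = -J Aᵀ J`, `J = diag(J₂, …, J₂)`, is conjugate
transposition, so `Z_n` is the fixed space of this ℂ-linear anti-involution. Hence
`W ↦ g W gˢ` preserves `Z_n` for every complex `g`; it is quadratic in the entries of `g` and
equals `W ↦ Ǔ W Ǔᴴ` at `g = Ǔ`.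

For uniqueness: every complex matrix is `X̌ + i Y̌`, so the check images form a real form of
`M_{2n}(ℂ)`, and a complex polynomial vanishing on a real form vanishes identically. Clearing
denominators by a power of `det`, and multiplying by one more `det` to cover the singular check
matrices, two rational representations that agree on `GL(n, ℍ)` agree everywhere.
-/

theorem MvPolynomial.eq_zero_of_eval_ofReal_eq_zero {σ : Type*} {S : MvPolynomial σ ℂ}
    (h : ∀ t : σ → ℝ, eval (fun i => (t i : ℂ)) S = 0) : S = 0 := by
  refine funext_set (fun _ => Set.range ((↑) : ℝ → ℂ))
    (fun _ => Set.infinite_range_of_injective Complex.ofReal_injective) fun x hx => ?_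
  choose t ht using fun i => hx i trivial
  simpa [show x = fun i => (t i : ℂ) from _root_.funext fun i => (ht i).symm] using h t

theorem MvPolynomial.eq_zero_of_eval_linearMap_eq_zero {κ M : Type*} [Finite κ] [AddCommGroup M]
    [Module ℝ M] (E : M →ₗ[ℝ] κ → ℂ) (hE : Submodule.span ℂ (Set.range E) = ⊤)
    {S : MvPolynomial κ ℂ} (h : ∀ y, eval (E y) S = 0) : S = 0 := by
  -- in a basis of `κ → ℂ` taken from `range E`, `S` becomes a polynomial vanishing on real points
  obtain ⟨t, htE, hspan, hli⟩ := exists_linearIndependent ℂ (Set.range E)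
  have := hli.finite
  have := Fintype.ofFinite t
  set S' := bind₁ (fun k => ∑ v : t, C ((v : κ → ℂ) k) * X v) S
  have heval : ∀ c : t → ℂ, eval c S' = eval (∑ v : t, c v • (v : κ → ℂ)) S := fun c => by
    rw [show eval c S' = _ from eval₂Hom_bind₁ _ _ _ _]
    exact congrArg (fun x => eval x S) (_root_.funext fun k => by simp [mul_comm])
  have hS' : S' = 0 := eq_zero_of_eval_ofReal_eq_zero fun c => by
    have hmem : ∑ v : t, (c v : ℂ) • (v : κ → ℂ) ∈ LinearMap.range E := by
      simp only [Complex.coe_smul]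
      exact Submodule.sum_mem _ fun v _ => Submodule.smul_mem _ _ (htE v.2)
    obtain ⟨y, hy⟩ := hmem
    rw [heval, ← hy, h]
  refine MvPolynomial.funext fun x => ?_
  have hx : x ∈ Submodule.span ℂ (Set.range ((↑) : t → κ → ℂ)) := by
    rw [Subtype.range_coe, hspan, hE]; trivial
  obtain ⟨c, rfl⟩ := (Submodule.mem_span_range_iff_exists_fun ℂ).1 hx
  rw [map_zero, ← heval, hS', map_zero]

theorem MvPolynomial.exists_eval_eq_linearMap_map_eval {σ ι κ R : Type*} [CommSemiring R]
    [Fintype ι] [Fintype κ] [DecidableEq ι] [DecidableEq κ] (ℓ : Matrix ι κ R →ₗ[R] R)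
    (A : Matrix ι κ (MvPolynomial σ R)) :
    ∃ P : MvPolynomial σ R, ∀ x, eval x P = ℓ (A.map (eval x)) := by
  refine ⟨∑ i, ∑ j, C (ℓ (single i j 1)) * A i j, fun x => ?_⟩
  conv_rhs => rw [matrix_eq_sum_single (A.map (eval x))]
  simp only [map_sum]
  refine Finset.sum_congr rfl fun i _ => Finset.sum_congr rfl fun j _ => ?_
  rw [map_mul, eval_C, mul_comm, ← smul_eq_mul, ← map_smul, smul_single, smul_eq_mul, mul_one,
    map_apply]

theorem eq_of_mul_det_pow_eq_eval {ι : Type*} [Fintype ι] [DecidableEq ι]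
    {T : Set (Matrix ι ι ℂ)}
    (hT : ∀ Q : MvPolynomial (ι × ι) ℂ, (∀ s ∈ T, MvPolynomial.eval (fun p => s p.1 p.2) Q = 0) →
      Q = 0)
    {f f' : (Matrix ι ι ℂ)ˣ → ℂ} {k k' : ℕ} {P P' : MvPolynomial (ι × ι) ℂ}
    (hf : ∀ g, f g * (g : Matrix ι ι ℂ).det ^ k = MvPolynomial.eval (fun p => g p.1 p.2) P)
    (hf' : ∀ g, f' g * (g : Matrix ι ι ℂ).det ^ k' = MvPolynomial.eval (fun p => g p.1 p.2) P')
    (h : ∀ g : (Matrix ι ι ℂ)ˣ, (g : Matrix ι ι ℂ) ∈ T → f g = f' g) (g : (Matrix ι ι ℂ)ˣ) :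
    f g = f' g := by
  set D := (mvPolynomialX ι ι ℂ).det
  have hD : ∀ s : Matrix ι ι ℂ, MvPolynomial.eval (fun p => s p.1 p.2) D = s.det := fun s => by
    rw [eval_det_mvPolynomialX]; rfl
  -- the factor `D` makes the polynomial vanish also on the singular points of `T`
  have hQ := hT ((P * D ^ k' - P' * D ^ k) * D) fun s hs => by
    by_cases hs0 : s.det = 0
    · rw [map_mul, hD, hs0, mul_zero]
    · let u := ((isUnit_iff_isUnit_det s).2 (isUnit_iff_ne_zero.2 hs0)).unit
      have hu : (u : Matrix ι ι ℂ) = s := rfl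
      simp only [map_mul, map_sub, map_pow, hD, ← hu, ← hf, ← hf', h u (hu ▸ hs)]
      ring
  have hg := congrArg (MvPolynomial.eval fun p => (g : Matrix ι ι ℂ) p.1 p.2) hQ
  simp only [map_mul, map_sub, map_pow, hD, ← hf, ← hf', map_zero] at hg
  have hdet : (g : Matrix ι ι ℂ).det ≠ 0 := ((isUnit_iff_isUnit_det _).1 g.isUnit).ne_zero
  have : (f g - f' g) * ((g : Matrix ι ι ℂ).det ^ (k + k') * (g : Matrix ι ι ℂ).det) = 0 := by
    rw [← hg]; ring
  simpa [sub_eq_zero, hdet] using this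

section SymplecticAdjoint

variable {m : Type*} [DecidableEq m] {R S : Type*} [CommRing R] [CommRing S]

variable (m R) in
def symplecticJ : Matrix (m × Fin 2) (m × Fin 2) R :=
  comp m m (Fin 2) (Fin 2) R (diagonal fun _ => !![0, 1; -1, 0])

theorem transpose_symplecticJ : (symplecticJ m R)ᵀ = -symplecticJ m R := by
  have hJ₂ : (!![0, 1; -1, 0] : Matrix (Fin 2) (Fin 2) R)ᵀ = -!![0, 1; -1, 0] := by
    ext i j; fin_cases i <;> fin_cases j <;> simp
  rw [symplecticJ, transpose_comp, diagonal_transpose, diagonal_map (by simp)]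
  simp only [hJ₂]
  rw [← diagonal_neg]
  rfl

theorem map_symplecticJ (f : R →+* S) : (symplecticJ m R).map f = symplecticJ m S := by
  have hJ₂ : (!![0, 1; -1, 0] : Matrix (Fin 2) (Fin 2) R).map f = !![0, 1; -1, 0] := by
    ext i j; fin_cases i <;> fin_cases j <;> simp
  rw [symplecticJ, ← comp_map_map, diagonal_map (by simp), hJ₂, symplecticJ]

variable [Fintype m]

theorem symplecticJ_mul_self : symplecticJ m R * symplecticJ m R = -1 := by
  have hJ₂ : !![0, 1; -1, 0] * !![0, 1; -1, 0] = (-1 : Matrix (Fin 2) (Fin 2) R) := by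
    ext i j; fin_cases i <;> fin_cases j <;> simp
  rw [symplecticJ, ← compRingEquiv_apply, ← map_mul, diagonal_mul_diagonal, hJ₂,
    ← diagonal_neg, diagonal_one, map_neg, map_one]

variable (m R) in
def symplecticAdjoint :
    Matrix (m × Fin 2) (m × Fin 2) R →ₗ[R] Matrix (m × Fin 2) (m × Fin 2) R where
  toFun A := -(symplecticJ m R * Aᵀ * symplecticJ m R)
  map_add' A B := by simp only [transpose_add, Matrix.mul_add, Matrix.add_mul, neg_add]
  map_smul' c A := by simp

theorem symplecticAdjoint_apply (A : Matrix (m × Fin 2) (m × Fin 2) R) :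
    symplecticAdjoint m R A = -(symplecticJ m R * Aᵀ * symplecticJ m R) := rfl

theorem symplecticAdjoint_mul (A B : Matrix (m × Fin 2) (m × Fin 2) R) :
    symplecticAdjoint m R (A * B) = symplecticAdjoint m R B * symplecticAdjoint m R A := by
  have hJJ := symplecticJ_mul_self (m := m) (R := R)
  simp only [symplecticAdjoint_apply, transpose_mul, neg_mul_neg]
  calc -(symplecticJ m R * (Bᵀ * Aᵀ) * symplecticJ m R)
      = symplecticJ m R * Bᵀ * (symplecticJ m R * symplecticJ m R) * Aᵀ * symplecticJ m R := by
        rw [hJJ]; noncomm_ring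
    _ = _ := by noncomm_ring

theorem symplecticAdjoint_symplecticAdjoint (A : Matrix (m × Fin 2) (m × Fin 2) R) :
    symplecticAdjoint m R (symplecticAdjoint m R A) = A := by
  have hJJ := symplecticJ_mul_self (m := m) (R := R)
  simp only [symplecticAdjoint_apply, transpose_neg, transpose_mul, transpose_transpose,
    transpose_symplecticJ]
  calc _ = (symplecticJ m R * symplecticJ m R) * A * (symplecticJ m R * symplecticJ m R) := by
        noncomm_ring
    _ = A := by rw [hJJ]; noncomm_ring

theorem symplecticAdjoint_one : symplecticAdjoint m R 1 = 1 := by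
  rw [symplecticAdjoint_apply, transpose_one, Matrix.mul_one, symplecticJ_mul_self, neg_neg]

theorem map_symplecticAdjoint (f : R →+* S) (A : Matrix (m × Fin 2) (m × Fin 2) R) :
    (symplecticAdjoint m R A).map f = symplecticAdjoint m S (A.map f) := by
  rw [symplecticAdjoint_apply, symplecticAdjoint_apply, Matrix.map_neg _ (map_neg f),
    Matrix.map_mul, Matrix.map_mul, transpose_map, map_symplecticJ]

end SymplecticAdjoint

section Check

theorem check_star (x : Quaternion ℝ) : check (star x) = (check x)ᴴ := by
  ext a b; fin_cases a <;> fin_cases b <;> simp [check, Complex.ext_iff]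

theorem mul_transpose_check (x : Quaternion ℝ) :
    !![0, 1; -1, 0] * (check x)ᵀ = check (star x) * !![0, 1; -1, 0] := by
  ext a b
  fin_cases a <;> fin_cases b <;> simp [check, mul_apply, Fin.sum_univ_two, Complex.ext_iff]

theorem check_add (x y : Quaternion ℝ) : check (x + y) = check x + check y := by
  ext a b; fin_cases a <;> fin_cases b <;> simp [check, Complex.ext_iff] <;> ring

theorem check_smul (r : ℝ) (x : Quaternion ℝ) : check (r • x) = (r : ℂ) • check x := by
  ext a b; fin_cases a <;> fin_cases b <;> simp [check, Complex.ext_iff]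

theorem exists_check_add_I_smul (B : Matrix (Fin 2) (Fin 2) ℂ) :
    ∃ x y, check x + Complex.I • check y = B := by
  refine ⟨⟨(B 0 0 + B 1 1).re / 2, (B 0 0 - B 1 1).im / 2, (B 0 1 - B 1 0).re / 2,
      (B 0 1 + B 1 0).im / 2⟩,
    ⟨(B 0 0 + B 1 1).im / 2, (B 1 1 - B 0 0).re / 2, (B 0 1 - B 1 0).im / 2,
      -(B 0 1 + B 1 0).re / 2⟩, ?_⟩
  ext a b; fin_cases a <;> fin_cases b <;> simp [check, Complex.ext_iff] <;> constructor <;> ring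

variable {m : Type*}

theorem checkMat_eq_comp (X : Matrix m m (Quaternion ℝ)) :
    checkMat X = comp m m (Fin 2) (Fin 2) ℂ (X.map check) := rfl

theorem checkMat_add (X Y : Matrix m m (Quaternion ℝ)) :
    checkMat (X + Y) = checkMat X + checkMat Y := by
  ext p q; simp [checkMat, check_add]

theorem checkMat_smul (r : ℝ) (X : Matrix m m (Quaternion ℝ)) :
    checkMat (r • X) = (r : ℂ) • checkMat X := by
  ext p q; simp [checkMat, check_smul]

theorem conjTranspose_checkMat (X : Matrix m m (Quaternion ℝ)) :
    (checkMat X)ᴴ = checkMat Xᴴ := by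
  ext p q; simp [checkMat, check_star]

theorem exists_checkMat_add_I_smul (M : Matrix (m × Fin 2) (m × Fin 2) ℂ) :
    ∃ X Y, checkMat X + Complex.I • checkMat Y = M := by
  choose x y hxy using fun i j => exists_check_add_I_smul (of fun a b => M (i, a) (j, b))
  exact ⟨x, y, Matrix.ext fun p q => congrFun (congrFun (hxy p.1 q.1) p.2) q.2⟩

variable [Fintype m] [DecidableEq m]

theorem symplecticJ_mul_transpose_checkMat (X : Matrix m m (Quaternion ℝ)) :
    symplecticJ m ℂ * (checkMat X)ᵀ = checkMat Xᴴ * symplecticJ m ℂ := by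
  rw [symplecticJ, checkMat_eq_comp, checkMat_eq_comp, transpose_comp, ← compRingEquiv_apply,
    ← compRingEquiv_apply, ← compRingEquiv_apply, ← map_mul, ← map_mul]
  congr 1
  funext i j
  simp only [diagonal_mul, mul_diagonal, map_apply, transpose_apply, conjTranspose_apply]
  exact mul_transpose_check _

theorem symplecticAdjoint_checkMat (X : Matrix m m (Quaternion ℝ)) :
    symplecticAdjoint m ℂ (checkMat X) = checkMat Xᴴ := by
  rw [symplecticAdjoint_apply, symplecticJ_mul_transpose_checkMat, Matrix.mul_assoc,
    symplecticJ_mul_self, Matrix.mul_neg, Matrix.mul_one, neg_neg]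

end Check

theorem eq_zero_of_eval_checkMat_eq_zero {m : Type*} [Finite m]
    {S : MvPolynomial ((m × Fin 2) × (m × Fin 2)) ℂ}
    (h : ∀ U : Matrix m m (Quaternion ℝ), MvPolynomial.eval (fun p => checkMat U p.1 p.2) S = 0) :
    S = 0 := by
  let E : Matrix m m (Quaternion ℝ) →ₗ[ℝ] (m × Fin 2) × (m × Fin 2) → ℂ :=
    { toFun := fun U p => checkMat U p.1 p.2
      map_add' := fun U V => by ext p; simp [checkMat_add]
      map_smul' := fun r U => by ext p; simp [checkMat_smul] }
  refine MvPolynomial.eq_zero_of_eval_linearMap_eq_zero E (Submodule.eq_top_iff'.2 fun x => ?_) h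
  obtain ⟨X, Y, hXY⟩ := exists_checkMat_add_I_smul (of fun p q => x (p, q))
  have hx : x = E X + Complex.I • E Y := by
    ext p; exact (congrFun (congrFun hXY p.1) p.2).symm
  rw [hx]
  exact add_mem (Submodule.subset_span ⟨X, rfl⟩)
    (Submodule.smul_mem _ _ (Submodule.subset_span ⟨Y, rfl⟩))

theorem mem_Zn_iff {n : ℕ} {M : Matrix (Fin n × Fin 2) (Fin n × Fin 2) ℂ} :
    M ∈ Zn n ↔ symplecticAdjoint (Fin n) ℂ M = M := by
  constructor
  · intro hM
    induction hM using Submodule.span_induction with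
    | mem _ hx => obtain ⟨X, hX, rfl⟩ := hx; rw [symplecticAdjoint_checkMat, hX]
    | zero => exact map_zero _
    | add _ _ _ _ h₁ h₂ => rw [map_add, h₁, h₂]
    | smul c _ _ h => rw [map_smul, h]
  · intro hM
    obtain ⟨X, Y, hXY⟩ := exists_checkMat_add_I_smul M
    have hsum : M + symplecticAdjoint (Fin n) ℂ M
        = checkMat (X + Xᴴ) + Complex.I • checkMat (Y + Yᴴ) := by
      rw [← hXY, map_add, map_smul, symplecticAdjoint_checkMat, symplecticAdjoint_checkMat,
        checkMat_add, checkMat_add]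
      module
    have hhalf : M = (1 / 2 : ℂ) • (M + symplecticAdjoint (Fin n) ℂ M) := by
      rw [hM]; module
    rw [hhalf, hsum]
    refine Submodule.smul_mem _ _ (add_mem (Submodule.subset_span ⟨_, ?_, rfl⟩)
      (Submodule.smul_mem _ _ (Submodule.subset_span ⟨_, ?_, rfl⟩)))
    exacts [isHermitian_add_transpose_self X, isHermitian_add_transpose_self Y]

theorem mul_mul_symplecticAdjoint_mem_Zn {n : ℕ} (g : Matrix (Fin n × Fin 2) (Fin n × Fin 2) ℂ)
    {M : Matrix (Fin n × Fin 2) (Fin n × Fin 2) ℂ} (hM : M ∈ Zn n) :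
    g * M * symplecticAdjoint (Fin n) ℂ g ∈ Zn n := by
  rw [mem_Zn_iff] at hM ⊢
  rw [symplecticAdjoint_mul, symplecticAdjoint_mul, symplecticAdjoint_symplecticAdjoint, hM,
    Matrix.mul_assoc]

noncomputable def znAction (n : ℕ) :
    Matrix (Fin n × Fin 2) (Fin n × Fin 2) ℂ →* Module.End ℂ (Zn n) where
  toFun g := (LinearMap.mulLeftRight ℂ (g, symplecticAdjoint (Fin n) ℂ g)).restrict
    fun _ hM => mul_mul_symplecticAdjoint_mem_Zn g hM
  map_one' := LinearMap.ext fun w => Subtype.ext <| by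
    simp [LinearMap.mulLeftRight_apply, symplecticAdjoint_one]
  map_mul' g h := LinearMap.ext fun w => Subtype.ext <| by
    change g * h * w * _ = g * (h * w * _) * _
    simp only [symplecticAdjoint_mul, Matrix.mul_assoc]

noncomputable def rhoJac (n : ℕ) :
    (Matrix (Fin n × Fin 2) (Fin n × Fin 2) ℂ)ˣ →* (Module.End ℂ (Zn n))ˣ :=
  Units.map (znAction n)

theorem coe_rhoJac_apply {n : ℕ} (g : (Matrix (Fin n × Fin 2) (Fin n × Fin 2) ℂ)ˣ) (w : Zn n) :
    ((rhoJac n g : Module.End ℂ (Zn n)) w : Matrix (Fin n × Fin 2) (Fin n × Fin 2) ℂ)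
      = g * w * symplecticAdjoint (Fin n) ℂ g := rfl

theorem rhoJac_checkMat {n : ℕ} (U : Matrix (Fin n) (Fin n) (Quaternion ℝ))
    (hU : IsUnit (checkMat U)) (w : Zn n) :
    ((rhoJac n hU.unit : Module.End ℂ (Zn n)) w : Matrix (Fin n × Fin 2) (Fin n × Fin 2) ℂ)
      = checkMat U * w * (checkMat U)ᴴ := by
  rw [coe_rhoJac_apply, IsUnit.unit_spec, symplecticAdjoint_checkMat, conjTranspose_checkMat]

theorem isRatRep_rhoJac (n : ℕ) : IsRatRep n (rhoJac n) := by
  obtain ⟨π, hπ⟩ := (Zn n).subtype.exists_leftInverse_of_injective (Zn n).ker_subtype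
  set B := Module.finBasis ℂ (Zn n)
  set G := mvPolynomialX (Fin n × Fin 2) (Fin n × Fin 2) ℂ
  choose P hP using fun i j => MvPolynomial.exists_eval_eq_linearMap_map_eval (B.coord i ∘ₗ π)
    (G * ((B j : Zn n) : Matrix _ _ ℂ).map MvPolynomial.C * symplecticAdjoint _ _ G)
  refine ⟨0, P, fun g i j => ?_⟩
  have hG : G.map (MvPolynomial.eval fun p => (g : Matrix _ _ ℂ) p.1 p.2) = g :=
    mvPolynomialX_map_eval₂ _ _
  have hC : ∀ x : (Fin n × Fin 2) × (Fin n × Fin 2) → ℂ,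
      ⇑(MvPolynomial.eval x) ∘ MvPolynomial.C = id := fun _ =>
    funext MvPolynomial.eval_C
  rw [pow_zero, mul_one, hP, Matrix.map_mul, Matrix.map_mul, map_symplecticAdjoint, hG,
    Matrix.map_map, hC, Matrix.map_id, ← coe_rhoJac_apply, LinearMap.toMatrix_apply,
    LinearMap.comp_apply, ← Submodule.subtype_apply, ← LinearMap.comp_apply π, hπ,
    LinearMap.id_apply, Module.Basis.coord_apply]

theorem IsRatRep.ext_of_checkMat {n : ℕ}
    {ρ ρ' : (Matrix (Fin n × Fin 2) (Fin n × Fin 2) ℂ)ˣ →* (Module.End ℂ (Zn n))ˣ}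
    (hρ : IsRatRep n ρ) (hρ' : IsRatRep n ρ')
    (h : ∀ (U : Matrix (Fin n) (Fin n) (Quaternion ℝ)) (hU : IsUnit (checkMat U)),
      ρ hU.unit = ρ' hU.unit) :
    ρ = ρ' := by
  obtain ⟨k, P, hP⟩ := hρ
  obtain ⟨k', P', hP'⟩ := hρ'
  set B := Module.finBasis ℂ (Zn n)
  refine MonoidHom.ext fun g => Units.ext <| (LinearMap.toMatrix B B).injective <|
    Matrix.ext fun i j => eq_of_mul_det_pow_eq_eval (T := Set.range checkMat)
      (fun Q hQ => eq_zero_of_eval_checkMat_eq_zero fun U => hQ _ ⟨U, rfl⟩)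
      (fun g => hP g i j) (fun g => hP' g i j) ?_ g
  rintro u ⟨U, hU⟩
  have hUu : IsUnit (checkMat U) := hU ▸ u.isUnit
  rw [show u = hUu.unit from Units.ext (hU ▸ hUu.unit_spec.symm), h U hUu]

/-- There is a unique rational representation `ρ_Jac : GL(2n,ℂ) → GL(Z_n)` with
`ρ_Jac(Ǔ) = ρ(U)`, i.e. `ρ_Jac(Ǔ)(W) = U W Ūᵀ`, for all `U ∈ GL(n,ℍ)`. -/
theorem exists_unique_rhoJac (n : ℕ) :
    ∃! ρ : (Matrix (Fin n × Fin 2) (Fin n × Fin 2) ℂ)ˣ →* (Module.End ℂ (Zn n))ˣ,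
      IsRatRep n ρ ∧
      ∀ (U : Matrix (Fin n) (Fin n) (Quaternion ℝ)) (hU : IsUnit (checkMat U))
        (w : Zn n),
        (((ρ hU.unit : Module.End ℂ (Zn n)) w : Matrix (Fin n × Fin 2) (Fin n × Fin 2) ℂ))
          = checkMat U * (w : Matrix (Fin n × Fin 2) (Fin n × Fin 2) ℂ) * (checkMat U)ᴴ := by
  refine ⟨rhoJac n, ⟨isRatRep_rhoJac n, rhoJac_checkMat⟩, fun ρ ⟨hρ, hρU⟩ => ?_⟩
  refine hρ.ext_of_checkMat (isRatRep_rhoJac n) fun U hU => ?_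
  exact Units.ext <| LinearMap.ext fun w => Subtype.ext <|
    (hρU U hU w).trans (rhoJac_checkMat U hU w).symm
end
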